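/- arXiv:1602.01964 — 2 statements merged into one kernel-verified Lean document; each statement's English description precedes it below -/
import Mathlib

section
/- Let ω(ζ) = (1/π)·arg(i·(1−ζ)/(1+ζ)) − 1 be the harmonic measure of the upper semicircle γ = {e^{iφ} : φ ∈ [0,π]} with respect to the unit disc. Fix 0 < α < π/2 and let Ω be the set of points ζ in the closed unit disc of the form ζ = 1 + r·e^{iθ} with r > 0 and π/2 ≤ θ ≤ π/2 + α. Then ω(ζ) ≤ −1 + α/π for all ζ ∈ Ω ∩ 𝔻. -/
open Metric

/-- Average of `u` over the circle of center `c` and radius `r`. -/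
noncomputable def circleAvg (u : ℂ → ℝ) (c : ℂ) (r : ℝ) : ℝ :=
  (1 / (2 * Real.pi)) * ∫ θ in (0:ℝ)..(2 * Real.pi), u (c + r * Complex.exp (θ * Complex.I))

/-- Harmonic on `s`: continuous and satisfying the mean value property. -/
def HarmonicOn' (f : ℂ → ℝ) (s : Set ℂ) : Prop :=
  ContinuousOn f s ∧ ∀ c r, 0 < r → Metric.closedBall c r ⊆ s → f c = circleAvg f c r

/-- The harmonic measure of the upper semicircle with respect to the unit disc,
formula (3.6): ω(ζ) = (1/π)·arg(i(1−ζ)/(1+ζ)) − 1. -/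
noncomputable def omegaUp (ζ : ℂ) : ℝ :=
  (1 / Real.pi) * Complex.arg (Complex.I * (1 - ζ) / (1 + ζ)) - 1

/-!
Write `ζ = 1 + r e^{i(π/2 + φ)}` with `0 ≤ φ ≤ α`. Then `i(1 - ζ) = w := r e^{iφ}` and
`1 + ζ = 2 + i w`, so `i(1 - ζ)/(1 + ζ)` is a positive multiple of
`w · conj (2 + i w) = 2 w - i |w|²`. In the right half-plane, where `arg z ≤ α` means
`Im z ≤ tan α · Re z`, subtracting `i |w|²` only lowers the argument, which is `φ ≤ α` for `2 w`.
-/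

open Complex Real

namespace Complex

theorem arg_le_iff_im_le_tan_mul_re {z : ℂ} {α : ℝ} (hre : 0 < z.re) (hα : |α| < π / 2) :
    arg z ≤ α ↔ z.im ≤ Real.tan α * z.re := by
  have harg : arg z ∈ Set.Ioo (-(π / 2)) (π / 2) :=
    abs_lt.mp (abs_arg_lt_pi_div_two_iff.mpr (Or.inl hre))
  rw [← Real.strictMonoOn_tan.le_iff_le harg (abs_lt.mp hα), tan_arg, div_le_iff₀ hre]

theorem arg_div_add_I_mul_le {w : ℂ} {c α : ℝ} (hc : 0 < c) (hre : 0 < w.re)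
    (hα : |α| < π / 2) (harg : arg w ≤ α) : arg (w / (c + I * w)) ≤ α := by
  have hden : c + I * w ≠ 0 := fun h => by
    simpa [hre.ne'] using congrArg Complex.im h
  have hconj : w * (starRingEnd ℂ) (c + I * w) = c * w - I * normSq w := by
    rw [map_add, map_mul, conj_I, conj_ofReal, ← mul_conj]
    ring
  have hdiv : w / (c + I * w) = (c * w - I * normSq w) * ((normSq (c + I * w))⁻¹ : ℝ) := by
    rw [div_eq_mul_inv, inv_def, ← mul_assoc, hconj]
  rw [hdiv, arg_mul_real (inv_pos.mpr (normSq_pos.mpr hden))]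
  have hwim := (arg_le_iff_im_le_tan_mul_re hre hα).mp harg
  have hsub_re : (c * w - I * normSq w).re = c * w.re := by simp
  have hsub_im : (c * w - I * normSq w).im = c * w.im - normSq w := by simp
  rw [arg_le_iff_im_le_tan_mul_re (by rw [hsub_re]; positivity) hα, hsub_re, hsub_im]
  nlinarith [normSq_nonneg w]

end Complex

theorem stmt_8_general (α : ℝ) (hα1 : α < Real.pi / 2) :
    ∀ ζ ∈ Metric.ball (0:ℂ) 1,
      (∃ r : ℝ, 0 < r ∧ ∃ θ ∈ Set.Icc (Real.pi / 2) (Real.pi / 2 + α),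
        ζ = 1 + (r : ℂ) * Complex.exp (θ * Complex.I)) →
      omegaUp ζ ≤ -1 + α / Real.pi := by
  rintro ζ - ⟨r, hr, θ, hθ, rfl⟩
  obtain ⟨φ, rfl⟩ : ∃ φ, θ = π / 2 + φ := ⟨θ - π / 2, by ring⟩
  have hφ0 : 0 ≤ φ := by linarith [hθ.1]
  have hφα : φ ≤ α := by linarith [hθ.2]
  set w : ℂ := r * exp (φ * I)
  have hexp : exp (↑(π / 2 + φ) * I) = I * exp (φ * I) := by
    rw [ofReal_add, add_mul, Complex.exp_add, ofReal_div, ofReal_ofNat, exp_pi_div_two_mul_I]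
  have hnum : I * (1 - (1 + r * exp (↑(π / 2 + φ) * I))) = w := by
    rw [hexp]; linear_combination (-w) * I_sq
  have hden : 1 + (1 + r * exp (↑(π / 2 + φ) * I)) = (2 : ℝ) + I * w := by
    rw [hexp]; push_cast; ring
  have hw_re : 0 < w.re := by
    rw [re_ofReal_mul, exp_ofReal_mul_I_re]
    exact mul_pos hr (cos_pos_of_mem_Ioo ⟨by linarith [pi_pos], by linarith⟩)
  have hw_arg : arg w = φ := by
    rw [arg_real_mul _ hr, exp_mul_I, arg_cos_add_sin_mul_I ⟨by linarith [pi_pos], by linarith⟩]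
  have hα : |α| < π / 2 := abs_lt.mpr ⟨by linarith [pi_pos], hα1⟩
  have harg := arg_div_add_I_mul_le two_pos hw_re hα (hw_arg.trans_le hφα)
  rw [omegaUp, hnum, hden, one_div_mul_eq_div]
  linarith [div_le_div_of_nonneg_right harg pi_pos.le]

/-- Inequality (3.7): in the sector at the boundary point 1 with opening α
(lines through 1 at angles in [π/2, π/2+α]), ω ≤ −1 + α/π. -/
theorem stmt_8 (α : ℝ) (hα0 : 0 < α) (hα1 : α < Real.pi / 2) :
    ∀ ζ ∈ Metric.ball (0:ℂ) 1,
      (∃ r : ℝ, 0 < r ∧ ∃ θ ∈ Set.Icc (Real.pi / 2) (Real.pi / 2 + α),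
        ζ = 1 + (r : ℂ) * Complex.exp (θ * Complex.I)) →
      omegaUp ζ ≤ -1 + α / Real.pi :=
  stmt_8_general α hα1
end

section
/- Two constants theorem: let u be subharmonic on the open unit disc 𝔻 and upper semicontinuous on the closed disc, with u ≤ C on the closed disc and limsup_{ζ→τ} u(ζ) ≤ 0 for every τ in the open upper semicircle γ° = {e^{iφ} : 0 < φ < π}. Then u(ζ) ≤ C·(ω(ζ) + 1) for all ζ ∈ 𝔻, where ω(ζ) = (1/π)·arg(i·(1−ζ)/(1+ζ)) − 1 is the harmonic measure of the upper semicircle. -/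
open Metric

/-- u is subharmonic on s: upper semicontinuous and satisfying the
sub-mean value inequality. -/
def SubharmonicOn' (u : ℂ → ℝ) (s : Set ℂ) : Prop :=
  UpperSemicontinuousOn u s ∧
    ∀ c r, 0 < r → Metric.closedBall c r ⊆ s → u c ≤ circleAvg u c r

/-!
For `C > 0` compare `u` with `h_ε = C (ω + 1) + ε log (2 / |1 - z²|)`, the real part of a
holomorphic function on the disc, since `ω + 1` is `arg` of the Möbius map
`z ↦ i (1 - z) / (1 + z)` of the disc onto the upper half-plane, divided by `π`. The function
`h_ε ≥ 0` dominates `u` at the boundary: on the upper semicircle because `limsup u ≤ 0` there, on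
the lower semicircle because `ω → 0` there and `u ≤ C`, and at the corners `±1`, where `ω` has no
limit, because the logarithm tends to `+∞`. The maximum principle for the subharmonic function
`u - h_ε` gives `u ≤ h_ε`, and letting `ε → 0` gives the claim. For `C ≤ 0` the claim is immediate
from `u ≤ C` and `ω ≤ 0`.
-/
open Filter Topology Set MeasureTheory

theorem circleAvg_eq_circleAverage (u : ℂ → ℝ) (c : ℂ) (r : ℝ) :
    circleAvg u c r = Real.circleAverage u c r := by
  rw [Real.circleAverage_def, smul_eq_mul, ← one_div]
  rfl

theorem harmonicOn'_re_of_differentiableOn {F : ℂ → ℂ} {s : Set ℂ}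
    (hF : DifferentiableOn ℂ F s) : HarmonicOn' (fun z => (F z).re) s := by
  refine ⟨Complex.continuous_re.comp_continuousOn hF.continuousOn, fun c r hr hcs => ?_⟩
  have hFc : DiffContOnCl ℂ F (ball c |r|) := by
    rw [abs_of_pos hr]
    exact (hF.mono hcs).diffContOnCl_ball subset_rfl
  have hint : CircleIntegrable F c r :=
    (hF.continuousOn.mono (sphere_subset_closedBall.trans hcs)).circleIntegrable hr.le
  show (F c).re = _
  rw [circleAvg_eq_circleAverage, ← hFc.circleAverage]
  exact (Complex.reCLM.circleAverage_comp_comm hint).symm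

theorem SubharmonicOn'.sub {u h : ℂ → ℝ} {s : Set ℂ} (hu : SubharmonicOn' u s)
    (hh : HarmonicOn' h s) (hh0 : ∀ z ∈ s, 0 ≤ h z) : SubharmonicOn' (u - h) s := by
  refine ⟨hu.1.add hh.1.neg.upperSemicontinuousOn, fun c r hr hcs => ?_⟩
  have hu0 := hu.2 c r hr hcs
  have hhc := hh.2 c r hr hcs
  rw [circleAvg_eq_circleAverage] at hu0 hhc ⊢
  have hint : CircleIntegrable h c r :=
    (hh.1.mono (sphere_subset_closedBall.trans hcs)).circleIntegrable hr.le
  by_cases hui : CircleIntegrable u c r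
  · rw [Real.circleAverage_sub hui hint, Pi.sub_apply, ← hhc]
    linarith
  · -- both averages are the junk value `0`, and then `h ≥ 0` is what is needed
    have huv : ¬ CircleIntegrable (u - h) c r := fun h' => hui (by simpa using h'.add hint)
    rw [Real.circleAverage.integral_undef hui] at hu0
    rw [Real.circleAverage.integral_undef huv, Pi.sub_apply]
    linarith [hh0 c (hcs (mem_closedBall_self hr.le))]

theorem circleAverage_lt_of_exists_lt {f : ℂ → ℝ} {c : ℂ} {R M : ℝ}
    (hf : UpperSemicontinuousOn f (sphere c |R|)) (hfi : CircleIntegrable f c R)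
    (hle : ∀ z ∈ sphere c |R|, f z ≤ M) (hlt : ∃ z ∈ sphere c |R|, f z < M) :
    Real.circleAverage f c R < M := by
  obtain ⟨z, hz, hzM⟩ := hlt
  obtain ⟨θ₀, rfl⟩ : z ∈ range (circleMap c R) := by rwa [range_circleMap]
  -- rotate the circle so that the point where `f < M` sits at the angle `π`
  set g : ℝ → ℝ := fun θ => f (circleMap c R (θ + (θ₀ - Real.pi)))
  have hgi : IntervalIntegrable g volume 0 (2 * Real.pi) := by
    have hper : Function.Periodic (fun θ => f (circleMap c R θ)) (2 * Real.pi) :=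
      fun θ => by simp only [periodic_circleMap c R θ]
    simpa using (hper.intervalIntegrable₀ Real.two_pi_pos.ne' hfi (θ₀ - Real.pi)
      (2 * Real.pi + (θ₀ - Real.pi))).comp_add_right (θ₀ - Real.pi)
  have hopen : IsOpen {θ | g θ < M} := by
    refine (upperSemicontinuousOn_univ_iff.1 ?_).isOpen_preimage M
    exact hf.comp ((continuous_circleMap c R).comp (continuous_add_const _)).continuousOn
      fun θ _ => circleMap_mem_sphere' c R _
  have hpos : 0 < ∫ θ in (0:ℝ)..2 * Real.pi, (M - g θ) := by
    rw [intervalIntegral.integral_pos_iff_support_of_nonneg_ae'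
      (Eventually.of_forall fun θ => sub_nonneg.2 (hle _ (circleMap_mem_sphere' c R _)))
      (intervalIntegrable_const.sub hgi)]
    have hne : ({θ | g θ < M} ∩ Ioo 0 (2 * Real.pi)).Nonempty :=
      ⟨Real.pi, by simpa [g] using hzM, Real.pi_pos, by linarith [Real.pi_pos]⟩
    exact ⟨Real.two_pi_pos, (IsOpen.measure_pos _ (hopen.inter isOpen_Ioo) hne).trans_le
      (measure_mono fun θ ⟨hθ, hθI⟩ => ⟨sub_ne_zero.2 hθ.ne', Ioo_subset_Ioc_self hθI⟩)⟩
  rw [intervalIntegral.integral_sub intervalIntegrable_const hgi, intervalIntegral.integral_const,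
    smul_eq_mul, sub_zero, sub_pos] at hpos
  rw [Real.circleAverage_eq_integral_add (θ₀ - Real.pi), smul_eq_mul,
    inv_mul_lt_iff₀ Real.two_pi_pos]
  linarith

theorem not_eventually_lt_of_mem_closure {α β : Type*} [TopologicalSpace α] [Preorder β]
    {v : α → β} {K U : Set α} {x : α} {m : β} (hKU : K ⊆ U) (hx : x ∈ closure K)
    (hK : ∀ z ∈ K, m ≤ v z) : ¬ ∀ᶠ z in 𝓝[U] x, v z < m := fun h => by
  have := mem_closure_iff_nhdsWithin_neBot.1 hx
  obtain ⟨z, hzm, hzK⟩ := ((h.filter_mono (nhdsWithin_mono x hKU)).and self_mem_nhdsWithin).exists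
  exact (hzm.trans_le (hK z hzK)).false

theorem UpperSemicontinuousOn.le_of_mem_closure {α β : Type*} [TopologicalSpace α]
    [LinearOrder β] {v : α → β} {K U : Set α} {x : α} {m : β} (hv : UpperSemicontinuousOn v U)
    (hKU : K ⊆ U) (hK : ∀ z ∈ K, m ≤ v z) (hxU : x ∈ U) (hx : x ∈ closure K) : m ≤ v x :=
  not_lt.1 fun hlt => not_eventually_lt_of_mem_closure hKU hx hK (hv x hxU m hlt)

theorem UpperSemicontinuousOn.exists_isMaxOn_of_eventually_lt {α β : Type*}
    [PseudoMetricSpace α] [ProperSpace α] [LinearOrder β] {v : α → β} {U : Set α} {m : β}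
    (hv : UpperSemicontinuousOn v U) (hU : Bornology.IsBounded U)
    (hbdry : ∀ τ ∈ frontier U, ∀ᶠ z in 𝓝[U] τ, v z < m) {z₀ : α} (hz₀ : z₀ ∈ U)
    (hm : m ≤ v z₀) : ∃ z ∈ U, IsMaxOn v U z := by
  set K := U ∩ v ⁻¹' Ici m
  have hKU : K ⊆ U := inter_subset_left
  have hK : ∀ z ∈ K, m ≤ v z := fun z hz => hz.2
  have hKclosed : IsClosed K := by
    refine closure_subset_iff_isClosed.1 fun x hx => ?_
    by_cases hxU : x ∈ U
    · exact ⟨hxU, hv.le_of_mem_closure hKU hK hxU hx⟩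
    · have hxfr : x ∈ frontier U := ⟨closure_mono hKU hx, fun h => hxU (interior_subset h)⟩
      exact absurd (hbdry x hxfr) (not_eventually_lt_of_mem_closure hKU hx hK)
  obtain ⟨z, hzK, hzmax⟩ := (hv.mono hKU).exists_isMaxOn (⟨z₀, hz₀, hm⟩ : K.Nonempty)
    (isCompact_of_isClosed_isBounded hKclosed (hU.subset hKU))
  refine ⟨z, hzK.1, fun w hw => ?_⟩
  by_cases hwK : m ≤ v w
  · exact hzmax ⟨hw, hwK⟩
  · exact (not_le.1 hwK).le.trans hzK.2

theorem SubharmonicOn'.eq_of_isMaxOn {v : ℂ → ℝ} {U : Set ℂ} {c : ℂ} (hv : SubharmonicOn' v U)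
    (hmax : IsMaxOn v U c) (hpos : 0 < v c) {r : ℝ} (hcU : closedBall c r ⊆ U) :
    ∀ z ∈ closedBall c r, v z = v c := by
  intro z hz
  rcases eq_or_ne z c with rfl | hzc
  · rfl
  set ρ := dist z c
  have hρ : 0 < ρ := dist_pos.2 hzc
  have hρU : closedBall c ρ ⊆ U := (closedBall_subset_closedBall hz).trans hcU
  have hsph : sphere c |ρ| ⊆ U := by rw [abs_of_pos hρ]; exact sphere_subset_closedBall.trans hρU
  refine le_antisymm (hmax (hcU hz)) (not_lt.1 fun hlt => ?_)
  have hmean := hv.2 c ρ hρ hρU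
  rw [circleAvg_eq_circleAverage] at hmean
  by_cases hint : CircleIntegrable v c ρ
  · refine (hmean.trans_lt (circleAverage_lt_of_exists_lt (hv.1.mono hsph) hint
      (fun w hw => hmax (hsph hw)) ⟨z, ?_, hlt⟩)).false
    rw [abs_of_pos hρ, mem_sphere]
  · rw [Real.circleAverage.integral_undef hint] at hmean
    exact hpos.not_ge hmean

theorem SubharmonicOn'.nonpos_of_eventually_lt {v : ℂ → ℝ} {U : Set ℂ}
    (hv : SubharmonicOn' v U) (hUo : IsOpen U) (hUb : Bornology.IsBounded U)
    (hUc : IsPreconnected U) (hbdry : ∀ τ ∈ frontier U, ∀ m > 0, ∀ᶠ z in 𝓝[U] τ, v z < m) :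
    ∀ z ∈ U, v z ≤ 0 := by
  intro z₀ hz₀
  by_contra! hpos
  obtain ⟨c, hcU, hmax⟩ :=
    hv.1.exists_isMaxOn_of_eventually_lt hUb (fun τ hτ => hbdry τ hτ _ hpos) hz₀ le_rfl
  have hcpos : 0 < v c := hpos.trans_le (hmax hz₀)
  set A := U ∩ v ⁻¹' {v c}
  have hAopen : IsOpen A := by
    refine isOpen_iff_mem_nhds.2 fun z ⟨hzU, hz⟩ => ?_
    obtain ⟨r, hr, hrU⟩ := nhds_basis_closedBall.mem_iff.1 (hUo.mem_nhds hzU)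
    have hzmax : IsMaxOn v U z := fun w hw => hz ▸ hmax hw
    refine mem_of_superset (closedBall_mem_nhds z hr) fun w hw => ⟨hrU hw, ?_⟩
    exact (hv.eq_of_isMaxOn hzmax (hz ▸ hcpos) hrU w hw).trans hz
  -- the maximum is attained on a nonempty open and relatively closed subset, hence everywhere
  have hUA : U ⊆ A := hUc.subset_of_closure_inter_subset hAopen ⟨c, hcU, hcU, rfl⟩
    fun z ⟨hzA, hzU⟩ => ⟨hzU, le_antisymm (hmax hzU)
      (hv.1.le_of_mem_closure inter_subset_left (fun w hw => hw.2.ge) hzU hzA)⟩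
  obtain ⟨τ, hτ⟩ : (frontier U).Nonempty :=
    nonempty_frontier_iff.2 ⟨⟨c, hcU⟩, fun h => NormedSpace.unbounded_univ ℝ ℂ (h ▸ hUb)⟩
  exact not_eventually_lt_of_mem_closure subset_rfl (frontier_subset_closure hτ)
    (fun z hz => (hUA hz).2.ge) (hbdry τ hτ _ hcpos)

noncomputable def diskToHalfPlane (z : ℂ) : ℂ := Complex.I * (1 - z) / (1 + z)

theorem omegaUp_eq (z : ℂ) : omegaUp z = Complex.arg (diskToHalfPlane z) / Real.pi - 1 := by
  rw [omegaUp, diskToHalfPlane, one_div_mul_eq_div]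

theorem diskToHalfPlane_re (z : ℂ) :
    (diskToHalfPlane z).re = 2 * z.im / Complex.normSq (1 + z) := by
  rw [diskToHalfPlane, Complex.div_re]
  simp only [Complex.mul_re, Complex.mul_im, Complex.add_re, Complex.add_im, Complex.sub_re,
    Complex.sub_im, Complex.I_re, Complex.I_im, Complex.one_re, Complex.one_im]
  ring

theorem diskToHalfPlane_im (z : ℂ) :
    (diskToHalfPlane z).im = (1 - Complex.normSq z) / Complex.normSq (1 + z) := by
  rw [diskToHalfPlane, Complex.div_im]
  simp only [Complex.mul_re, Complex.mul_im, Complex.add_re, Complex.add_im, Complex.sub_re,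
    Complex.sub_im, Complex.I_re, Complex.I_im, Complex.one_re, Complex.one_im,
    Complex.normSq_apply]
  ring

theorem one_add_ne_zero_of_mem_ball {z : ℂ} (hz : z ∈ ball (0 : ℂ) 1) : 1 + z ≠ 0 := by
  rintro h
  rw [← neg_eq_of_add_eq_zero_right h, mem_ball_zero_iff, norm_neg, norm_one] at hz
  exact lt_irrefl _ hz

theorem diskToHalfPlane_im_pos {z : ℂ} (hz : z ∈ ball (0 : ℂ) 1) : 0 < (diskToHalfPlane z).im := by
  have hz1 : Complex.normSq z < 1 := by
    rw [Complex.normSq_eq_norm_sq]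
    have := mem_ball_zero_iff.1 hz
    nlinarith [norm_nonneg z]
  rw [diskToHalfPlane_im]
  exact div_pos (by linarith) (Complex.normSq_pos.2 (one_add_ne_zero_of_mem_ball hz))

theorem omegaUp_mem_Icc {z : ℂ} (hz : z ∈ ball (0 : ℂ) 1) : omegaUp z ∈ Icc (-1) 0 := by
  have h0 := Complex.arg_nonneg_iff.2 (diskToHalfPlane_im_pos hz).le
  have h1 := div_le_one_of_le₀ (Complex.arg_le_pi (diskToHalfPlane z)) Real.pi_pos.le
  rw [omegaUp_eq]
  constructor <;> linarith [div_nonneg h0 Real.pi_pos.le]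

theorem tendsto_omegaUp_of_im_neg {τ : ℂ} (hτ : ‖τ‖ = 1) (him : τ.im < 0) :
    Tendsto omegaUp (𝓝[ball 0 1] τ) (𝓝 0) := by
  have hτ1 : 1 + τ ≠ 0 := fun h => by
    rw [← neg_eq_of_add_eq_zero_right h] at him
    simp at him
  have hre : (diskToHalfPlane τ).re < 0 := by
    rw [diskToHalfPlane_re]
    exact div_neg_of_neg_of_pos (by linarith) (Complex.normSq_pos.2 hτ1)
  have him0 : (diskToHalfPlane τ).im = 0 := by
    rw [diskToHalfPlane_im, Complex.normSq_eq_norm_sq, hτ]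
    simp
  have hcont : ContinuousAt diskToHalfPlane τ :=
    (continuousAt_const.mul (continuousAt_const.sub continuousAt_id)).div
      (continuousAt_const.add continuousAt_id) hτ1
  have hmaps : Tendsto diskToHalfPlane (𝓝[ball 0 1] τ)
      (𝓝[{w | 0 ≤ w.im}] (diskToHalfPlane τ)) :=
    tendsto_nhdsWithin_of_tendsto_nhds_of_eventually_within _
      (hcont.tendsto.mono_left nhdsWithin_le_nhds)
      (eventually_mem_nhdsWithin.mono fun z hz => (diskToHalfPlane_im_pos hz).le)
  have harg := (Complex.tendsto_arg_nhdsWithin_im_nonneg_of_re_neg_of_im_zero hre him0).comp hmaps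
  rw [funext omegaUp_eq]
  simpa [Real.pi_ne_zero] using (harg.div_const Real.pi).sub_const 1

theorem re_one_sub_sq_pos {z : ℂ} (hz : z ∈ ball (0 : ℂ) 1) : 0 < (1 - z ^ 2).re := by
  have h := (Complex.re_le_norm (z ^ 2)).trans_lt
    (by rw [norm_pow]; exact pow_lt_one₀ (norm_nonneg z) (mem_ball_zero_iff.1 hz) two_ne_zero)
  rw [Complex.sub_re, Complex.one_re]
  linarith

theorem norm_one_sub_sq_mem_Ioc {z : ℂ} (hz : z ∈ ball (0 : ℂ) 1) :
    ‖1 - z ^ 2‖ ∈ Ioc 0 2 := by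
  refine ⟨norm_pos_iff.2 fun h => by simpa [h] using re_one_sub_sq_pos hz, ?_⟩
  have : ‖z‖ ^ 2 ≤ 1 := pow_le_one₀ (norm_nonneg z) (mem_ball_zero_iff.1 hz).le
  linarith [norm_sub_le (1 : ℂ) (z ^ 2), norm_one (α := ℂ), norm_pow z 2]

theorem log_two_div_norm_one_sub_sq_nonneg {z : ℂ} (hz : z ∈ ball (0 : ℂ) 1) :
    0 ≤ Real.log (2 / ‖1 - z ^ 2‖) :=
  have h := norm_one_sub_sq_mem_Ioc hz
  Real.log_nonneg ((one_le_div h.1).2 h.2)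

theorem tendsto_log_two_div_norm_one_sub_sq {τ : ℂ} (hτ : τ ^ 2 = 1) :
    Tendsto (fun z => Real.log (2 / ‖1 - z ^ 2‖)) (𝓝[ball 0 1] τ) atTop := by
  have hnorm : Tendsto (fun z : ℂ => ‖1 - z ^ 2‖) (𝓝[ball 0 1] τ) (𝓝[>] 0) := by
    refine tendsto_nhdsWithin_of_tendsto_nhds_of_eventually_within _ ?_
      (eventually_mem_nhdsWithin.mono fun z hz => (norm_one_sub_sq_mem_Ioc hz).1)
    have : Continuous fun z : ℂ => ‖1 - z ^ 2‖ := by fun_prop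
    simpa [hτ] using (this.tendsto τ).mono_left nhdsWithin_le_nhds
  have hdiv : Tendsto (fun x : ℝ => 2 / x) (𝓝[>] 0) atTop := by
    simpa [div_eq_mul_inv] using tendsto_inv_nhdsGT_zero.const_mul_atTop (two_pos (α := ℝ))
  exact Real.tendsto_log_atTop.comp (hdiv.comp hnorm)

noncomputable def majorant (C ε : ℝ) (z : ℂ) : ℝ :=
  C * (omegaUp z + 1) + ε * Real.log (2 / ‖1 - z ^ 2‖)

noncomputable def majorantFun (C ε : ℝ) (z : ℂ) : ℂ :=
  (C / Real.pi : ℝ) * (-Complex.I * Complex.log (diskToHalfPlane z)) +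
    ε * Complex.log (2 / (1 - z ^ 2))

theorem re_majorantFun (C ε : ℝ) (z : ℂ) : (majorantFun C ε z).re = majorant C ε z := by
  simp only [majorantFun, majorant, omegaUp_eq, Complex.add_re, Complex.re_ofReal_mul,
    neg_mul, Complex.neg_re, Complex.I_mul_re, Complex.log_im, neg_neg, Complex.log_re,
    norm_div, Complex.norm_ofNat, sub_add_cancel]
  ring

theorem differentiableOn_majorantFun (C ε : ℝ) :
    DifferentiableOn ℂ (majorantFun C ε) (ball 0 1) := by
  intro z hz
  have hz2 := norm_one_sub_sq_mem_Ioc hz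
  have hsub : 1 - z ^ 2 ≠ 0 := norm_pos_iff.1 hz2.1
  have hg : DifferentiableAt ℂ diskToHalfPlane z :=
    ((differentiableAt_const _).mul ((differentiableAt_const _).sub differentiableAt_id)).div
      ((differentiableAt_const _).add differentiableAt_id) (one_add_ne_zero_of_mem_ball hz)
  have hgs : diskToHalfPlane z ∈ Complex.slitPlane :=
    Complex.mem_slitPlane_iff.2 (Or.inr (diskToHalfPlane_im_pos hz).ne')
  have hq : DifferentiableAt ℂ (fun w : ℂ => 2 / (1 - w ^ 2)) z :=
    (differentiableAt_const _).div ((differentiableAt_const _).sub (differentiableAt_pow 2)) hsub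
  have hqs : 2 / (1 - z ^ 2) ∈ Complex.slitPlane := by
    refine Complex.mem_slitPlane_iff.2 (Or.inl ?_)
    have hre := re_one_sub_sq_pos hz
    have hns := Complex.normSq_pos.2 hsub
    rw [Complex.div_re, Complex.im_ofNat, zero_mul, zero_div, add_zero, Complex.re_ofNat]
    positivity
  exact (((differentiableAt_const _).mul ((differentiableAt_const _).mul (hg.clog hgs))).add
    ((differentiableAt_const _).mul (hq.clog hqs))).differentiableWithinAt

theorem harmonicOn'_majorant (C ε : ℝ) : HarmonicOn' (majorant C ε) (ball 0 1) := by
  simpa only [re_majorantFun] using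
    harmonicOn'_re_of_differentiableOn (differentiableOn_majorantFun C ε)

theorem majorant_nonneg {C ε : ℝ} (hC : 0 ≤ C) (hε : 0 ≤ ε) {z : ℂ} (hz : z ∈ ball (0 : ℂ) 1) :
    0 ≤ majorant C ε z :=
  add_nonneg (mul_nonneg hC (by linarith [(omegaUp_mem_Icc hz).1]))
    (mul_nonneg hε (log_two_div_norm_one_sub_sq_nonneg hz))

theorem eventually_lt_majorant_of_im_nonpos {C ε : ℝ} (hC : 0 ≤ C) (hε : 0 < ε) {τ : ℂ}
    (hτ : ‖τ‖ = 1) (him : τ.im ≤ 0) {a : ℝ} (ha : a < C) :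
    ∀ᶠ z in 𝓝[ball 0 1] τ, a < majorant C ε z := by
  rcases him.lt_or_eq with him | him
  · have hω : Tendsto (fun z => C * (omegaUp z + 1)) (𝓝[ball 0 1] τ) (𝓝 C) := by
      simpa using ((tendsto_omegaUp_of_im_neg hτ him).add_const 1).const_mul C
    filter_upwards [hω.eventually (eventually_gt_nhds ha), self_mem_nhdsWithin] with z hz hzb
    exact hz.trans_le <|
      le_add_of_nonneg_right (mul_nonneg hε.le (log_two_div_norm_one_sub_sq_nonneg hzb))
  · -- at the corners `τ = ±1` the logarithmic term alone beats every bound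
    have hτ2 : τ ^ 2 = 1 := by
      have hn := Complex.normSq_eq_norm_sq τ
      rw [hτ, Complex.normSq_apply, him] at hn
      refine Complex.ext ?_ (by simp [pow_two, him])
      simp only [pow_two, Complex.mul_re, him, mul_zero, sub_zero, Complex.one_re]
      linarith
    refine (tendsto_atTop_mono' _ ?_
      ((tendsto_log_two_div_norm_one_sub_sq hτ2).const_mul_atTop hε)).eventually_gt_atTop a
    filter_upwards [self_mem_nhdsWithin] with z hz
    exact le_add_of_nonneg_left (mul_nonneg hC (by linarith [(omegaUp_mem_Icc hz).1]))

theorem eventually_lt_at_upper_semicircle {u : ℂ → ℝ} {C : ℝ} (hbd : ∀ z ∈ ball (0 : ℂ) 1, u z ≤ C)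
    (hbdry : ∀ φ ∈ Ioo (0 : ℝ) Real.pi,
      limsup u (𝓝[ball 0 1] (Complex.exp (φ * Complex.I))) ≤ 0)
    {τ : ℂ} (hτ : ‖τ‖ = 1) (him : 0 < τ.im) {m : ℝ} (hm : 0 < m) :
    ∀ᶠ z in 𝓝[ball 0 1] τ, u z < m := by
  have harg : Complex.arg τ ∈ Ioo 0 Real.pi :=
    ⟨(Complex.arg_nonneg_iff.2 him.le).lt_of_ne
      fun h => him.ne' (Complex.arg_eq_zero_iff.1 h.symm).2,
      Complex.arg_lt_pi_iff.2 (Or.inr him.ne')⟩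
  have hexp : Complex.exp (Complex.arg τ * Complex.I) = τ := by
    simpa [hτ] using Complex.norm_mul_exp_arg_mul_I τ
  have hlim := hbdry _ harg
  rw [hexp] at hlim
  exact eventually_lt_of_limsup_lt (hlim.trans_lt hm)
    (isBoundedUnder_of_eventually_le (eventually_mem_nhdsWithin.mono hbd))

theorem SubharmonicOn'.le_majorant {u : ℂ → ℝ} {C ε : ℝ} (hsh : SubharmonicOn' u (ball 0 1))
    (hC : 0 ≤ C) (hε : 0 < ε) (hbd : ∀ z ∈ ball (0 : ℂ) 1, u z ≤ C)
    (hbdry : ∀ φ ∈ Ioo (0 : ℝ) Real.pi,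
      limsup u (𝓝[ball 0 1] (Complex.exp (φ * Complex.I))) ≤ 0) :
    ∀ z ∈ ball (0 : ℂ) 1, u z ≤ majorant C ε z := by
  have hv := hsh.sub (harmonicOn'_majorant C ε) fun z hz => majorant_nonneg hC hε.le hz
  suffices ∀ τ ∈ sphere (0 : ℂ) 1, ∀ m > 0, ∀ᶠ z in 𝓝[ball 0 1] τ, (u - majorant C ε) z < m by
    refine fun z hz => sub_nonpos.1 (hv.nonpos_of_eventually_lt isOpen_ball isBounded_ball
      (convex_ball 0 1).isPreconnected ?_ z hz)
    rwa [frontier_ball 0 one_ne_zero]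
  intro τ hτ m hm
  rw [mem_sphere_zero_iff_norm] at hτ
  rcases lt_or_ge 0 τ.im with him | him
  · filter_upwards [eventually_lt_at_upper_semicircle hbd hbdry hτ him hm, self_mem_nhdsWithin]
      with z hzu hz
    rw [Pi.sub_apply]
    linarith [majorant_nonneg hC hε.le hz]
  · filter_upwards [eventually_lt_majorant_of_im_nonpos hC hε hτ him (sub_lt_self C hm),
      self_mem_nhdsWithin] with z hzm hz
    rw [Pi.sub_apply]
    linarith [hbd z hz]

theorem stmt_10_general (u : ℂ → ℝ) (C : ℝ)
    (hsh : SubharmonicOn' u (Metric.ball (0:ℂ) 1))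
    (hbd : ∀ ζ ∈ Metric.closedBall (0:ℂ) 1, u ζ ≤ C)
    (hbdry : ∀ φ ∈ Set.Ioo (0:ℝ) Real.pi,
      Filter.limsup u (nhdsWithin (Complex.exp (φ * Complex.I)) (Metric.ball 0 1)) ≤ 0) :
    ∀ ζ ∈ Metric.ball (0:ℂ) 1, u ζ ≤ C * (omegaUp ζ + 1) := by
  intro ζ hζ
  have hbd' : ∀ z ∈ ball (0 : ℂ) 1, u z ≤ C := fun z hz => hbd z (ball_subset_closedBall hz)
  rcases le_or_gt C 0 with hC | hC
  · nlinarith [hbd' ζ hζ, (omegaUp_mem_Icc hζ).2]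
  · have hlim : Tendsto (fun ε => majorant C ε ζ) (𝓝[>] 0) (𝓝 (C * (omegaUp ζ + 1))) :=
      ((continuous_const.add (continuous_id.mul continuous_const)).tendsto' 0 _
        (by simp)).mono_left nhdsWithin_le_nhds
    exact ge_of_tendsto hlim <| eventually_nhdsWithin_of_forall fun ε hε =>
      hsh.le_majorant hC.le hε hbd' hbdry ζ hζ

/-- Two constants theorem (estimate (5.1)): if u is subharmonic on 𝔻, u ≤ C on the
closed disc, and limsup u ≤ 0 at every point of the open upper semicircle, then
u ≤ C·(ω + 1) on 𝔻. -/
theorem stmt_10 (u : ℂ → ℝ) (C : ℝ)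
    (hsh : SubharmonicOn' u (Metric.ball (0:ℂ) 1))
    (husc : UpperSemicontinuousOn u (Metric.closedBall (0:ℂ) 1))
    (hbd : ∀ ζ ∈ Metric.closedBall (0:ℂ) 1, u ζ ≤ C)
    (hbdry : ∀ φ ∈ Set.Ioo (0:ℝ) Real.pi,
      Filter.limsup u (nhdsWithin (Complex.exp (φ * Complex.I)) (Metric.ball 0 1)) ≤ 0) :
    ∀ ζ ∈ Metric.ball (0:ℂ) 1, u ζ ≤ C * (omegaUp ζ + 1) :=
  stmt_10_general u C hsh hbd hbdry
end
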